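/- Let p be a prime and α > 0. Let u : ℚ_p → ℝ be a bounded square-integrable function with Q_α(u) < ∞, and for n ∈ ℕ let B_n := {x ∈ ℚ_p : ‖x‖_p ≤ p^n}. Then limsup_{n→∞} Q_α(u · 1_{B_n}) ≤ Q_α(u); that is, truncation by indicators of large balls asymptotically does not increase the Dirichlet energy of 𝔇^α. -/

import Mathlib

open MeasureTheory Filter

/-- The `p`-adic Gamma function `Γ_p(z) = (1 - p^(z-1)) / (1 - p^(-z))`. -/
noncomputable def gammaP (p : ℕ) (z : ℝ) : ℝ :=
  (1 - (p : ℝ) ^ (z - 1)) / (1 - (p : ℝ) ^ (-z))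

/-- The Dirichlet energy `Q_α` of `𝔇^α`, with values in `[0,∞]`:
`Q_α(φ) = -(1/(2Γ_p(-α))) ∬ (φ(x)-φ(y))² ‖x-y‖_p^{-(1+α)} dm(x) dm(y)`
(note `-(1/(2Γ_p(-α))) > 0` for `α > 0`). -/
noncomputable def QformE (p : ℕ) [Fact p.Prime] [MeasurableSpace ℚ_[p]]
    (m : Measure ℚ_[p]) (α : ℝ) (φ : ℚ_[p] → ℝ) : ENNReal :=
  ENNReal.ofReal (-(1 / (2 * gammaP p (-α)))) *
    ∫⁻ q : ℚ_[p] × ℚ_[p],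
      ENNReal.ofReal ((φ q.1 - φ q.2) ^ 2 * ‖q.1 - q.2‖ ^ (-(1 + α))) ∂(m.prod m)

/-!
For pairs `(x, y)` with both points in `B_n` the energy integrand of `u·1_{B_n}` is that of `u`,
and for pairs with both points outside it vanishes. For a mixed pair `x ∈ B_n`, `y ∉ B_n` the
ultrametric inequality gives `‖x - y‖ = ‖y‖`, so the mixed pairs contribute at most
`2 ‖u‖₂² ∫_{‖y‖ > p^n} ‖y‖^{-(1+α)} dm(y)`. Cutting this tail into the shells
`p^j ≤ ‖y‖ < p^(j+1)`, of measure at most `p^(j+1)`, bounds it by the tail `∑_{j ≥ n} p·p^{-αj}`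
of a convergent geometric series.
-/

open Metric Set Topology
open scoped ENNReal

section Tail

variable {E : Type*} [SeminormedAddCommGroup E] {b : ℝ}

lemma compl_closedBall_pow_subset_iUnion_preimage_norm_Ico (hb : 1 < b) (n : ℕ) :
    (closedBall (0 : E) (b ^ n))ᶜ ⊆ ⋃ k : ℕ, norm ⁻¹' Ico (b ^ (k + n)) (b ^ (k + n + 1)) := by
  intro y hy
  have hbn : 0 < b ^ n := pow_pos (zero_lt_one.trans hb) n
  have hy : b ^ n < ‖y‖ := by simpa using hy
  obtain ⟨k, hk, hk'⟩ := exists_nat_pow_near ((one_le_div hbn).2 hy.le) hb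
  refine mem_iUnion.2 ⟨k, ?_, ?_⟩
  · rwa [pow_add, ← le_div_iff₀ hbn]
  · rwa [add_right_comm, pow_add, ← div_lt_iff₀ hbn]

variable [MeasurableSpace E] {m : Measure E} {s : ℝ}

lemma setLIntegral_preimage_norm_Ico_rpow_neg_le (hb : 1 < b) (hs : 0 ≤ s)
    (hm : ∀ k : ℕ, m (closedBall 0 (b ^ k)) ≤ ENNReal.ofReal (b ^ k)) (j : ℕ) :
    ∫⁻ y in norm ⁻¹' Ico (b ^ j) (b ^ (j + 1)), ENNReal.ofReal (‖y‖ ^ (-s)) ∂m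
      ≤ ENNReal.ofReal (b * (b ^ (1 - s)) ^ j) := by
  have hb0 : 0 < b := zero_lt_one.trans hb
  have hbj : 0 < b ^ j := pow_pos hb0 j
  have hshell : norm ⁻¹' Ico (b ^ j) (b ^ (j + 1)) ⊆ closedBall (0 : E) (b ^ (j + 1)) :=
    fun y hy => mem_closedBall_zero_iff.2 hy.2.le
  have hpow : (b ^ j) ^ (-s) * b ^ (j + 1) = b * (b ^ (1 - s)) ^ j := by
    rw [← Real.rpow_natCast, ← Real.rpow_natCast, ← Real.rpow_natCast, ← Real.rpow_mul hb0.le,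
      ← Real.rpow_mul hb0.le, ← Real.rpow_add hb0,
      show (j : ℝ) * -s + ((j + 1 : ℕ) : ℝ) = 1 + (1 - s) * j by push_cast; ring,
      Real.rpow_add hb0, Real.rpow_one]
  calc ∫⁻ y in norm ⁻¹' Ico (b ^ j) (b ^ (j + 1)), ENNReal.ofReal (‖y‖ ^ (-s)) ∂m
      ≤ ∫⁻ _ in norm ⁻¹' Ico (b ^ j) (b ^ (j + 1)), ENNReal.ofReal ((b ^ j) ^ (-s)) ∂m :=
        setLIntegral_mono measurable_const fun y hy =>
          ENNReal.ofReal_le_ofReal (Real.rpow_le_rpow_of_nonpos hbj hy.1 (neg_nonpos.2 hs))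
    _ ≤ ENNReal.ofReal ((b ^ j) ^ (-s)) * ENNReal.ofReal (b ^ (j + 1)) := by
        rw [setLIntegral_const]
        exact mul_le_mul_right ((measure_mono hshell).trans (hm _)) _
    _ = ENNReal.ofReal (b * (b ^ (1 - s)) ^ j) := by
        rw [← ENNReal.ofReal_mul (by positivity), hpow]

theorem tendsto_setLIntegral_compl_closedBall_rpow_neg (hb : 1 < b) (hs : 1 < s)
    (hm : ∀ k : ℕ, m (closedBall 0 (b ^ k)) ≤ ENNReal.ofReal (b ^ k)) :
    Tendsto (fun n : ℕ => ∫⁻ y in (closedBall (0 : E) (b ^ n))ᶜ, ENNReal.ofReal (‖y‖ ^ (-s)) ∂m)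
      atTop (𝓝 0) := by
  have hb0 : 0 < b := zero_lt_one.trans hb
  set f : ℕ → ℝ := fun j => b * (b ^ (1 - s)) ^ j
  have hf : Summable f := (summable_geometric_of_lt_one (by positivity)
    (Real.rpow_lt_one_of_one_lt_of_neg hb (by linarith))).mul_left b
  have hf_ne_top : ∑' j, ENNReal.ofReal (f j) ≠ ∞ := by
    rw [← ENNReal.ofReal_tsum_of_nonneg (fun j => by positivity) hf]
    exact ENNReal.ofReal_ne_top
  refine tendsto_of_tendsto_of_tendsto_of_le_of_le tendsto_const_nhds
    (ENNReal.tendsto_sum_nat_add _ hf_ne_top) (fun _ => zero_le) fun n => ?_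
  calc ∫⁻ y in (closedBall (0 : E) (b ^ n))ᶜ, ENNReal.ofReal (‖y‖ ^ (-s)) ∂m
      ≤ ∫⁻ y in ⋃ k : ℕ, norm ⁻¹' Ico (b ^ (k + n)) (b ^ (k + n + 1)),
          ENNReal.ofReal (‖y‖ ^ (-s)) ∂m :=
        lintegral_mono_set (compl_closedBall_pow_subset_iUnion_preimage_norm_Ico hb n)
    _ ≤ ∑' k : ℕ, ∫⁻ y in norm ⁻¹' Ico (b ^ (k + n)) (b ^ (k + n + 1)),
          ENNReal.ofReal (‖y‖ ^ (-s)) ∂m :=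
        lintegral_iUnion_le _ _
    _ ≤ ∑' k, ENNReal.ofReal (f (k + n)) :=
        ENNReal.tsum_le_tsum fun k =>
          setLIntegral_preimage_norm_Ico_rpow_neg_le hb (by linarith) hm (k + n)

end Tail

noncomputable def jumpEnergy {E : Type*} [SeminormedAddCommGroup E] [MeasurableSpace E]
    (m : Measure E) (g : ℝ → ℝ≥0∞) (φ : E → ℝ) : ℝ≥0∞ :=
  ∫⁻ q : E × E, ENNReal.ofReal ((φ q.1 - φ q.2) ^ 2) * g ‖q.1 - q.2‖ ∂m.prod m

section Truncation

variable {E : Type*} [SeminormedAddCommGroup E] [IsUltrametricDist E]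

lemma IsUltrametricDist.norm_sub_eq_of_norm_lt {x y : E} (h : ‖x‖ < ‖y‖) : ‖x - y‖ = ‖y‖ := by
  have h' : ‖x‖ ≠ ‖-y‖ := by rw [norm_neg]; exact h.ne
  rw [sub_eq_add_neg, IsUltrametricDist.norm_add_eq_max_of_norm_ne_norm h', norm_neg,
    max_eq_right h.le]

lemma ofReal_sq_sub_indicator_closedBall_mul_le (g : ℝ → ℝ≥0∞) (u : E → ℝ) (R : ℝ) (x y : E) :
    ENNReal.ofReal (((closedBall 0 R).indicator u x - (closedBall 0 R).indicator u y) ^ 2) *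
        g ‖x - y‖
      ≤ ENNReal.ofReal ((u x - u y) ^ 2) * g ‖x - y‖
        + (closedBall 0 R).indicator (fun x => ENNReal.ofReal (u x ^ 2)) x
          * (closedBall 0 R)ᶜ.indicator (fun y => g ‖y‖) y
        + (closedBall 0 R)ᶜ.indicator (fun x => g ‖x‖) x
          * (closedBall 0 R).indicator (fun y => ENNReal.ofReal (u y ^ 2)) y := by
  by_cases hx : x ∈ closedBall 0 R <;> by_cases hy : y ∈ closedBall 0 R
  · simp [hx, hy]
  · have hxy : ‖x - y‖ = ‖y‖ := IsUltrametricDist.norm_sub_eq_of_norm_lt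
      ((mem_closedBall_zero_iff.1 hx).trans_lt (not_le.1 (by simpa using hy)))
    simp [hx, hy, hxy]
  · have hxy : ‖x - y‖ = ‖x‖ := by
      rw [norm_sub_rev]
      exact IsUltrametricDist.norm_sub_eq_of_norm_lt
        ((mem_closedBall_zero_iff.1 hy).trans_lt (not_le.1 (by simpa using hx)))
    simp [hx, hy, hxy, mul_comm]
  · simp [hx, hy]

theorem jumpEnergy_indicator_closedBall_le [MeasurableSpace E] [OpensMeasurableSpace E]
    [MeasurableSub₂ E] {m : Measure E} [SFinite m] {g : ℝ → ℝ≥0∞} (hg : Measurable g)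
    {u : E → ℝ} (hu : Measurable u) (R : ℝ) :
    jumpEnergy m g ((closedBall 0 R).indicator u)
      ≤ jumpEnergy m g u
        + 2 * (∫⁻ x, ENNReal.ofReal (u x ^ 2) ∂m) * ∫⁻ y in (closedBall 0 R)ᶜ, g ‖y‖ ∂m := by
  set a := (closedBall (0 : E) R).indicator fun x => ENNReal.ofReal (u x ^ 2)
  set t := (closedBall (0 : E) R)ᶜ.indicator fun y => g ‖y‖
  have ha : Measurable a := (hu.pow_const 2).ennreal_ofReal.indicator measurableSet_closedBall
  have ht : Measurable t := Measurable.indicator (by fun_prop) measurableSet_closedBall.compl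
  have hF : Measurable fun q : E × E =>
      ENNReal.ofReal ((u q.1 - u q.2) ^ 2) * g ‖q.1 - q.2‖ := by fun_prop
  have hFat : Measurable fun q : E × E =>
      ENNReal.ofReal ((u q.1 - u q.2) ^ 2) * g ‖q.1 - q.2‖ + a q.1 * t q.2 := by fun_prop
  have hS : ∫⁻ x, a x ∂m ≤ ∫⁻ x, ENNReal.ofReal (u x ^ 2) ∂m :=
    lintegral_mono fun x => indicator_le_self _ _ x
  calc jumpEnergy m g ((closedBall 0 R).indicator u)
      ≤ ∫⁻ q : E × E, ENNReal.ofReal ((u q.1 - u q.2) ^ 2) * g ‖q.1 - q.2‖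
          + a q.1 * t q.2 + t q.1 * a q.2 ∂m.prod m :=
        lintegral_mono fun q => ofReal_sq_sub_indicator_closedBall_mul_le g u R q.1 q.2
    _ = jumpEnergy m g u + (∫⁻ x, a x ∂m) * (∫⁻ y, t y ∂m)
          + (∫⁻ x, t x ∂m) * (∫⁻ y, a y ∂m) := by
        rw [lintegral_add_left hFat, lintegral_add_left hF,
          lintegral_prod_mul ha.aemeasurable ht.aemeasurable,
          lintegral_prod_mul ht.aemeasurable ha.aemeasurable, jumpEnergy]
    _ ≤ _ := by
        rw [lintegral_indicator measurableSet_closedBall.compl, mul_comm (∫⁻ x in _, _ ∂m),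
          add_assoc, ← two_mul, mul_assoc]
        gcongr

end Truncation

lemma QformE_eq_mul_jumpEnergy (p : ℕ) [Fact p.Prime] [MeasurableSpace ℚ_[p]]
    (m : Measure ℚ_[p]) (α : ℝ) (φ : ℚ_[p] → ℝ) :
    QformE p m α φ = ENNReal.ofReal (-(1 / (2 * gammaP p (-α))))
      * jumpEnergy m (fun t => ENNReal.ofReal (t ^ (-(1 + α)))) φ := by
  simp only [QformE, jumpEnergy, ENNReal.ofReal_mul (sq_nonneg _)]

theorem limsup_energy_truncation_le_general (p : ℕ) [Fact p.Prime]
    [MeasurableSpace ℚ_[p]] [BorelSpace ℚ_[p]] (m : Measure ℚ_[p])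
    (hm : ∀ (x : ℚ_[p]) (k : ℤ),
      m (Metric.closedBall x ((p : ℝ) ^ k)) = ENNReal.ofReal ((p : ℝ) ^ k))
    (α : ℝ) (hα : 0 < α) (u : ℚ_[p] → ℝ)
    (humeas : Measurable u)
    (huL2 : Integrable (fun x => u x ^ 2) m) :
    Filter.limsup
      (fun n : ℕ => QformE p m α
        ((Metric.closedBall (0 : ℚ_[p]) ((p : ℝ) ^ (n : ℤ))).indicator u))
      Filter.atTop
      ≤ QformE p m α u := by
  have hp : (1 : ℝ) < p := mod_cast (Fact.out : p.Prime).one_lt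
  have : IsLocallyFiniteMeasure m := ⟨fun x => ⟨closedBall x 1, closedBall_mem_nhds x one_pos,
    by simpa using (hm x 0).trans_lt ENNReal.ofReal_lt_top⟩⟩
  set c := ENNReal.ofReal (-(1 / (2 * gammaP p (-α))))
  set g : ℝ → ℝ≥0∞ := fun t => ENNReal.ofReal (t ^ (-(1 + α)))
  set S := ∫⁻ x, ENNReal.ofReal (u x ^ 2) ∂m
  have hS : 2 * S ≠ ∞ := ENNReal.mul_ne_top ENNReal.ofNat_ne_top huL2.lintegral_lt_top.ne
  have htail := tendsto_setLIntegral_compl_closedBall_rpow_neg hp (by linarith : 1 < 1 + α)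
    fun k => by simpa using (hm 0 k).le
  have hlim : Tendsto (fun n : ℕ => c * (jumpEnergy m g u
      + 2 * S * ∫⁻ y in (closedBall 0 ((p : ℝ) ^ n))ᶜ, g ‖y‖ ∂m)) atTop
      (𝓝 (c * (jumpEnergy m g u + 2 * S * 0))) :=
    ENNReal.Tendsto.const_mul
      (tendsto_const_nhds.add (ENNReal.Tendsto.const_mul htail (Or.inr hS)))
      (Or.inr ENNReal.ofReal_ne_top)
  rw [mul_zero, add_zero, ← QformE_eq_mul_jumpEnergy] at hlim
  refine (limsup_le_limsup (Eventually.of_forall fun n => ?_)).trans_eq hlim.limsup_eq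
  rw [QformE_eq_mul_jumpEnergy, zpow_natCast]
  gcongr
  exact jumpEnergy_indicator_closedBall_le (measurable_id.pow_const _).ennreal_ofReal humeas _

/-- Truncating a bounded square-integrable function of finite Dirichlet energy by
the indicators of the balls `B_n = {‖x‖_p ≤ p^n}` asymptotically does not increase
the energy: `limsup_n Q_α(u·1_{B_n}) ≤ Q_α(u)`. -/
theorem limsup_energy_truncation_le (p : ℕ) [Fact p.Prime]
    [MeasurableSpace ℚ_[p]] [BorelSpace ℚ_[p]] (m : Measure ℚ_[p])
    (hm : ∀ (x : ℚ_[p]) (k : ℤ),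
      m (Metric.closedBall x ((p : ℝ) ^ k)) = ENNReal.ofReal ((p : ℝ) ^ k))
    (α : ℝ) (hα : 0 < α) (u : ℚ_[p] → ℝ)
    (humeas : Measurable u) (hubd : ∃ C : ℝ, ∀ x, |u x| ≤ C)
    (huL2 : Integrable (fun x => u x ^ 2) m)
    (huQ : QformE p m α u < ⊤) :
    Filter.limsup
      (fun n : ℕ => QformE p m α
        ((Metric.closedBall (0 : ℚ_[p]) ((p : ℝ) ^ (n : ℤ))).indicator u))
      Filter.atTop
      ≤ QformE p m α u :=
  limsup_energy_truncation_le_general p m hm α hα u humeas huL2
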